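/- Let A be a commutative ring of prime characteristic p, let e₁, ..., e_m ∈ A be pairwise orthogonal idempotents summing to 1, let x ∈ A, and suppose for each j there is c_j ∈ A with c_j^p = c_j such that (x - c_j)^{p^s} e_j = 0. Then x^{p^{s+1}} = x^{p^s}. -/

import Mathlib

/-!
On the `j`-th component `x - c_j` is nilpotent of order `p ^ s`. Since the Frobenius fixes `c_j`,
`(x - c_j) ^ p ^ k = x ^ p ^ k - c_j`, so both `x ^ p ^ s - c_j` and `x ^ p ^ (s + 1) - c_j` vanish on
that component, and so does their difference `x ^ p ^ (s + 1) - x ^ p ^ s`. A ring element vanishing on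
every component of a decomposition of `1` is zero.
-/

open Finset

theorem pow_pow_eq_self_of_pow_eq_self {M : Type*} [Monoid M] {c : M} {p : ℕ} (hc : c ^ p = c)
    (k : ℕ) : c ^ p ^ k = c := by
  simpa only [Function.IsFixedPt, pow_iterate] using Function.IsFixedPt.iterate (f := (· ^ p)) hc k

theorem eq_zero_of_forall_mul_eq_zero_of_sum_eq_one {R ι : Type*} [Semiring R] {s : Finset ι}
    {e : ι → R} (hsum : ∑ i ∈ s, e i = 1) {a : R} (h : ∀ i ∈ s, a * e i = 0) : a = 0 :=
  calc a = a * ∑ i ∈ s, e i := by rw [hsum, mul_one]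
    _ = 0 := by rw [mul_sum]; exact sum_eq_zero h

section ExpChar

variable {R : Type*} [CommRing R] (p : ℕ) [ExpChar R p]

theorem sub_pow_expChar_pow_of_pow_eq_self {c : R} (hc : c ^ p = c) (x : R) (k : ℕ) :
    (x - c) ^ p ^ k = x ^ p ^ k - c := by
  rw [sub_pow_expChar_pow, pow_pow_eq_self_of_pow_eq_self hc]

theorem pow_expChar_pow_succ_sub_mul_eq_zero {x c e : R} (hc : c ^ p = c) {s : ℕ}
    (h : (x - c) ^ p ^ s * e = 0) : (x ^ p ^ (s + 1) - x ^ p ^ s) * e = 0 := by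
  have hle : p ^ s ≤ p ^ (s + 1) := Nat.pow_le_pow_right (expChar_pos R p) s.le_succ
  have h' : (x - c) ^ p ^ (s + 1) * e = 0 := by
    rw [← Nat.sub_add_cancel hle, pow_add, mul_assoc, h, mul_zero]
  rw [sub_pow_expChar_pow_of_pow_eq_self p hc] at h h'
  calc (x ^ p ^ (s + 1) - x ^ p ^ s) * e = (x ^ p ^ (s + 1) - c) * e - (x ^ p ^ s - c) * e := by
        ring
    _ = 0 := by rw [h, h', sub_zero]

end ExpChar

theorem stmt10_general (p : ℕ) [Fact p.Prime] (A : Type*) [CommRing A] [CharP A p]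
    (m : ℕ) (E : Fin m → A)
    (hsum : ∑ j, E j = 1)
    (x : A) (c : Fin m → A) (hc : ∀ j, (c j) ^ p = c j)
    (s : ℕ) (h : ∀ j, (x - c j) ^ (p ^ s) * E j = 0) :
    x ^ (p ^ (s + 1)) = x ^ (p ^ s) :=
  sub_eq_zero.mp <| eq_zero_of_forall_mul_eq_zero_of_sum_eq_one hsum fun j _ =>
    pow_expChar_pow_succ_sub_mul_eq_zero p (hc j) (h j)

theorem stmt10 (p : ℕ) [Fact p.Prime] (A : Type*) [CommRing A] [CharP A p]
    (m : ℕ) (E : Fin m → A)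
    (hidem : ∀ j, E j * E j = E j)
    (horth : ∀ i j, i ≠ j → E i * E j = 0)
    (hsum : ∑ j, E j = 1)
    (x : A) (c : Fin m → A) (hc : ∀ j, (c j) ^ p = c j)
    (s : ℕ) (h : ∀ j, (x - c j) ^ (p ^ s) * E j = 0) :
    x ^ (p ^ (s + 1)) = x ^ (p ^ s) :=
  stmt10_general p A m E hsum x c hc s h
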